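/- arXiv:1604.03154 — 3 statements merged into one kernel-verified Lean document; each statement's English description precedes it below -/
import Mathlib

section
/- Let X be a preordered Banach space whose unit ball X^1 is ≤-bounded, i.e. there exists b ∈ X with x ≤ b for all x ∈ X^1. Then X^C = X^m: an element x ∈ X** is the →^◦_◦-limit of a d-Cauchy net with terms in X if and only if it is the →^◦_◦-limit of a ≤-increasing net with terms in X. -/
open TopologicalSpace ENNReal

/-- A (possibly non-reflexive) transitive relation, used to index nets. -/
def TransRel {ι : Type} (r : ι → ι → Prop) : Prop := ∀ a b c, r a b → r b c → r a c

/-- Directedness of the index relation of a net. -/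
def DirRel {ι : Type} (r : ι → ι → Prop) : Prop := ∀ a b, ∃ c, r a c ∧ r b c

/-- `liminf` of a net of extended nonnegative reals over a directed index:
`sup_γ inf_{γ ≺ δ} a δ`. -/
noncomputable def liminfN {ι : Type} (r : ι → ι → Prop) (a : ι → ℝ≥0∞) : ℝ≥0∞ :=
  ⨆ γ, ⨅ δ, ⨅ _ : r γ δ, a δ

/-- `limsup` of a net of extended nonnegative reals over a directed index:
`inf_γ sup_{γ ≺ δ} a δ`. -/
noncomputable def limsupN {ι : Type} (r : ι → ι → Prop) (a : ι → ℝ≥0∞) : ℝ≥0∞ :=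
  ⨅ γ, ⨆ δ, ⨆ _ : r γ δ, a δ

/-- Convergence of a net in `ℝ≥0∞` to `L`. -/
def TendstoN {ι : Type} (r : ι → ι → Prop) (a : ι → ℝ≥0∞) (L : ℝ≥0∞) : Prop :=
  liminfN r a = L ∧ limsupN r a = L

/-- Convergence of a real-valued net. -/
def TendstoRN {ι : Type} (r : ι → ι → Prop) (a : ι → ℝ) (L : ℝ) : Prop :=
  ∀ ε : ℝ, 0 < ε → ∃ γ₀, ∀ γ, r γ₀ γ → |a γ - L| < ε

/-- A distance: a `[0,∞]`-valued function satisfying the triangle inequality. -/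
def IsDistance {X : Type} (d : X → X → ℝ≥0∞) : Prop :=
  ∀ x y z, d x z ≤ d x y + d y z

/-- `d`-Cauchy net: `lim_γ sup_{γ ≺ δ} d(x_γ, x_δ) = 0`. -/
def DCauchyN {ι X : Type} (r : ι → ι → Prop) (d : X → X → ℝ≥0∞) (x : ι → X) : Prop :=
  ∀ ε : ℝ≥0∞, 0 < ε → ∃ γ₀, ∀ γ δ, r γ₀ γ → r γ δ → d (x γ) (x δ) < ε

/-- `d`-dominating net: `sup_γ lim_{γ ≺ δ} d(x_γ, x_δ) = 0`. -/
def DDomN {ι X : Type} (r : ι → ι → Prop) (d : X → X → ℝ≥0∞) (x : ι → X) : Prop :=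
  ∀ γ, ∀ ε : ℝ≥0∞, 0 < ε → ∃ δ₀, r γ δ₀ ∧ ∀ δ, r δ₀ δ → d (x γ) (x δ) < ε

/-- `x_λ →^◦ l` with holes tested against points of `T`:
`liminf_λ d(x_λ, c) ≥ d(l, c)` for all `c ∈ T`. -/
def UpperConvOn {ι X : Type} (r : ι → ι → Prop) (d : X → X → ℝ≥0∞) (T : Set X)
    (x : ι → X) (l : X) : Prop :=
  ∀ c ∈ T, d l c ≤ liminfN r fun γ => d (x γ) c

/-- `x_λ →_◦ l` with holes tested against points of `T`:
`liminf_λ d(c, x_λ) ≥ d(c, l)` for all `c ∈ T`. -/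
def LowerConvOn {ι X : Type} (r : ι → ι → Prop) (d : X → X → ℝ≥0∞) (T : Set X)
    (x : ι → X) (l : X) : Prop :=
  ∀ c ∈ T, d c l ≤ liminfN r fun γ => d c (x γ)

/-- `x_λ →^◦_◦ l` with holes tested against points of `T`. -/
def BiConvOn {ι X : Type} (r : ι → ι → Prop) (d : X → X → ℝ≥0∞) (T : Set X)
    (x : ι → X) (l : X) : Prop :=
  UpperConvOn r d T x l ∧ LowerConvOn r d T x l

/-- The supremum distance on functions `Q → X`. -/
noncomputable def supD {Q X : Type} (d : X → X → ℝ≥0∞) (f g : Q → X) : ℝ≥0∞ :=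
  ⨆ p, d (f p) (g p)

/-- The upper ball topology `X^•`, generated by the balls `{x | d c x < ε}`. -/
def upperBallTop {X : Type} (d : X → X → ℝ≥0∞) : TopologicalSpace X :=
  TopologicalSpace.generateFrom {s | ∃ c, ∃ ε : ℝ≥0∞, 0 < ε ∧ s = {x | d c x < ε}}

/-- The lower ball topology `X_•`, generated by the balls `{x | d x c < ε}`. -/
def lowerBallTop {X : Type} (d : X → X → ℝ≥0∞) : TopologicalSpace X :=
  TopologicalSpace.generateFrom {s | ∃ c, ∃ ε : ℝ≥0∞, 0 < ε ∧ s = {x | d x c < ε}}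

/-- `X` is `d`-complete: every `d`-Cauchy net has a `→^◦_◦`-limit. -/
def DComplete {X : Type} (d : X → X → ℝ≥0∞) : Prop :=
  ∀ (ι : Type) (r : ι → ι → Prop) (x : ι → X), Nonempty ι → TransRel r → DirRel r →
    DCauchyN r d x → ∃ l, BiConvOn r d Set.univ x l

/-- `y` is `d`-finite: `d(y, x_λ) → d(y, l)` whenever `(x_λ)` is `d`-Cauchy and
`x_λ →^◦_◦ l`. -/
def DFinite {X : Type} (d : X → X → ℝ≥0∞) (y : X) : Prop :=
  ∀ (ι : Type) (r : ι → ι → Prop) (x : ι → X) (l : X), Nonempty ι → TransRel r → DirRel r →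
    DCauchyN r d x → BiConvOn r d Set.univ x l →
      TendstoN r (fun γ => d y (x γ)) (d y l)

/-- The `d`-finite topology `X^{F•}`, generated by upper balls with `d`-finite centres. -/
def dFiniteTop {X : Type} (d : X → X → ℝ≥0∞) : TopologicalSpace X :=
  TopologicalSpace.generateFrom
    {s | ∃ c, DFinite d c ∧ ∃ ε : ℝ≥0∞, 0 < ε ∧ s = {x | d c x < ε}}

/-- The bidual `X**` of a real normed space. -/
abbrev Bidual (X : Type) [NormedAddCommGroup X] [NormedSpace ℝ X] : Type :=
  StrongDual ℝ (StrongDual ℝ X)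

/-- The positive cone of a preordered Banach space: a norm-closed set containing `0`,
closed under nonnegative scaling and addition. -/
def IsGoodCone (X : Type) [NormedAddCommGroup X] [NormedSpace ℝ X] (K : Set X) : Prop :=
  IsClosed K ∧ (0 : X) ∈ K ∧ (∀ r : ℝ, 0 ≤ r → ∀ x ∈ K, r • x ∈ K) ∧
    ∀ x ∈ K, ∀ y ∈ K, x + y ∈ K

/-- `Q = X^{*1}_+`, the positive unit ball of the dual. -/
def posQ (X : Type) [NormedAddCommGroup X] [NormedSpace ℝ X] (K : Set X) :
    Set (StrongDual ℝ X) :=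
  {φ | ‖φ‖ ≤ 1 ∧ ∀ v ∈ K, 0 ≤ φ v}

/-- The canonical hemimetric on `X**`: `d(x,y) = ‖x - y‖_≤ = sup_{φ ∈ Q} φ(x - y)`. -/
noncomputable def ddist {X : Type} [NormedAddCommGroup X] [NormedSpace ℝ X] (K : Set X)
    (x y : Bidual X) : ℝ≥0∞ :=
  ⨆ φ ∈ posQ X K, ENNReal.ofReal ((x - y) φ)

/-- The weak* topology on `Q = X^{*1}_+`. -/
def qTop (X : Type) [NormedAddCommGroup X] [NormedSpace ℝ X] (K : Set X) :
    TopologicalSpace (posQ X K) :=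
  TopologicalSpace.induced (fun φ : posQ X K => fun v : X => φ.1 v) inferInstance

/-- `x ∈ X^S`: the restriction of `x ∈ X**` to `Q` is weak* lower semicontinuous. -/
def lscS {X : Type} [NormedAddCommGroup X] [NormedSpace ℝ X] (K : Set X)
    (x : Bidual X) : Prop :=
  @LowerSemicontinuous (posQ X K) ℝ (qTop X K) _ fun φ => x φ.1

/-- `B^{<∞}`: the bounded functions `Q → X**`. -/
def Bset (X : Type) [NormedAddCommGroup X] [NormedSpace ℝ X] (Q : Type) :
    Set (Q → Bidual X) := {f | ∃ M, ∀ p, ‖f p‖ ≤ M}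

/-- The upper ball topology on `X^S`, generated by the balls
`{y | d(c, y) < ε}` for `c ∈ X^S`. -/
def upTopXS {X : Type} [NormedAddCommGroup X] [NormedSpace ℝ X] (K : Set X) :
    TopologicalSpace {x : Bidual X // lscS K x} :=
  TopologicalSpace.generateFrom
    {s | ∃ c : {x : Bidual X // lscS K x}, ∃ ε : ℝ≥0∞, 0 < ε ∧ s = {y | ddist K c.1 y.1 < ε}}

/-- `f ∈ S`: a bounded function `Q → X**` taking values in `X^S` that is continuous
into `X^S` with its upper ball topology. -/
def MemS {X : Type} [NormedAddCommGroup X] [NormedSpace ℝ X] (K : Set X)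
    {Q : Type} [TopologicalSpace Q] (f : Q → Bidual X) : Prop :=
  f ∈ Bset X Q ∧ ∃ h : ∀ p, lscS K (f p),
    @Continuous Q {x : Bidual X // lscS K x} _ (upTopXS K) fun p => ⟨f p, h p⟩

/-!
Because the unit ball lies below `b`, every positive functional satisfies `‖φ‖ ≤ φ b`, so
`d(u, v) ≤ t` forces `u - t b ≤ v`; for `u v ∈ X` this is an honest inequality in the cone,
by Hahn–Banach separation from the closed cone `K`. A `d`-Cauchy net `y` converging to `x` is
therefore turned into an increasing one by reindexing over the pairs `(γ, n)` after which the
net is `2⁻ⁿ`-Cauchy and pushing it down to `y_γ - 2^{1-n} b`. The new net lies below `x`, which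
gives its lower limit, and is `O(2⁻ⁿ)`-close to `y_γ`, which gives its upper limit. Conversely,
an increasing net has `d(y_γ, y_δ) = 0` and is trivially `d`-Cauchy.
-/

open Filter Topology NormedSpace

section CauchyNets

variable {ι Y : Type} {r : ι → ι → Prop} {d : Y → Y → ℝ≥0∞} {y : ι → Y}

structure CauchyIndex (r : ι → ι → Prop) (d : Y → Y → ℝ≥0∞) (y : ι → Y) where
  idx : ι
  n : ℕ
  dist_le : ∀ δ, r idx δ → d (y idx) (y δ) ≤ ENNReal.ofReal (2⁻¹ ^ n)

namespace CauchyIndex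

def Precedes (p q : CauchyIndex r d y) : Prop := r p.idx q.idx ∧ p.n < q.n

lemma exists_rel_idx (hC : DCauchyN r d y) (hdir : DirRel r) (α : ι) (n : ℕ) :
    ∃ p : CauchyIndex r d y, r α p.idx ∧ p.n = n := by
  obtain ⟨γ₀, hγ₀⟩ := hC (ENNReal.ofReal (2⁻¹ ^ n)) (ENNReal.ofReal_pos.2 (by positivity))
  obtain ⟨γ, hαγ, hγ₀γ⟩ := hdir α γ₀
  exact ⟨⟨γ, n, fun δ hγδ => (hγ₀ γ δ hγ₀γ hγδ).le⟩, hαγ, rfl⟩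

lemma nonempty [h : Nonempty ι] (hC : DCauchyN r d y) (hdir : DirRel r) :
    Nonempty (CauchyIndex r d y) :=
  let ⟨α⟩ := h; let ⟨p, _⟩ := exists_rel_idx hC hdir α 0; ⟨p⟩

lemma transRel_precedes (htr : TransRel r) : TransRel (Precedes (r := r) (d := d) (y := y)) :=
  fun _ _ _ hpq hqs => ⟨htr _ _ _ hpq.1 hqs.1, hpq.2.trans hqs.2⟩

lemma dirRel_precedes (htr : TransRel r) (hdir : DirRel r) (hC : DCauchyN r d y) :
    DirRel (Precedes (r := r) (d := d) (y := y)) := by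
  intro p q
  obtain ⟨α, hpα, hqα⟩ := hdir p.idx q.idx
  obtain ⟨s, hαs, hs⟩ := exists_rel_idx hC hdir α (max p.n q.n + 1)
  exact ⟨s, ⟨htr _ _ _ hpα hαs, by omega⟩, ⟨htr _ _ _ hqα hαs, by omega⟩⟩

end CauchyIndex

lemma dist_le_of_lowerConvOn (hdir : DirRel r) {T : Set Y} {x : Y}
    (hx : LowerConvOn r d T y x) {γ : ι} (hγ : y γ ∈ T) {ε : ℝ≥0∞}
    (h : ∀ δ, r γ δ → d (y γ) (y δ) ≤ ε) : d (y γ) x ≤ ε :=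
  (hx _ hγ).trans <| iSup_le fun α => by
    obtain ⟨δ, hαδ, hγδ⟩ := hdir α γ
    exact iInf₂_le_of_le δ hαδ (h δ hγδ)

lemma lowerConvOn_of_forall_dist_eq_zero [Nonempty ι] (htri : IsDistance d) {T : Set Y}
    {x : Y} (h : ∀ i, d (y i) x = 0) : LowerConvOn r d T y x := by
  intro c _
  obtain ⟨i₀⟩ := ‹Nonempty ι›
  refine le_iSup_of_le i₀ (le_iInf₂ fun i _ => ?_)
  simpa [h i] using htri c (y i) x

lemma upperConvOn_of_dist_le (htri : IsDistance d) (htr : TransRel r) (hdir : DirRel r)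
    (hC : DCauchyN r d y) {T : Set Y} {x : Y} (hx : UpperConvOn r d T y x)
    {z : CauchyIndex r d y → Y} {C : ℝ} (hC0 : 0 ≤ C)
    (hz : ∀ p, d (y p.idx) (z p) ≤ ENNReal.ofReal (C * 2⁻¹ ^ p.n)) :
    UpperConvOn CauchyIndex.Precedes d T z x := by
  intro c hc
  set L := liminfN CauchyIndex.Precedes fun p => d (z p) c
  have hL : ∀ n : ℕ, liminfN r (fun γ => d (y γ) c) ≤ L + ENNReal.ofReal (C * 2⁻¹ ^ n) := by
    intro n
    refine iSup_le fun α => ?_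
    obtain ⟨p, hαp, rfl⟩ := CauchyIndex.exists_rel_idx hC hdir α n
    calc ⨅ δ, ⨅ _ : r α δ, d (y δ) c
        ≤ (⨅ q, ⨅ _ : p.Precedes q, d (z q) c) + ENNReal.ofReal (C * 2⁻¹ ^ p.n) := by
          simp only [ENNReal.iInf_add]
          refine le_iInf₂ fun q hpq => ?_
          calc ⨅ δ, ⨅ _ : r α δ, d (y δ) c
              ≤ d (y q.idx) c := iInf₂_le _ (htr _ _ _ hαp hpq.1)
            _ ≤ d (y q.idx) (z q) + d (z q) c := htri _ _ _
            _ ≤ ENNReal.ofReal (C * 2⁻¹ ^ p.n) + d (z q) c := by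
                gcongr
                exact (hz q).trans <| ENNReal.ofReal_le_ofReal <| mul_le_mul_of_nonneg_left
                  (pow_le_pow_of_le_one (by norm_num) (by norm_num) hpq.2.le) hC0
            _ = d (z q) c + ENNReal.ofReal (C * 2⁻¹ ^ p.n) := add_comm _ _
      _ ≤ L + ENNReal.ofReal (C * 2⁻¹ ^ p.n) := by
          gcongr
          exact le_iSup (fun p => ⨅ q, ⨅ _ : p.Precedes q, d (z q) c) p
  have hlim : Tendsto (fun n : ℕ => L + ENNReal.ofReal (C * 2⁻¹ ^ n)) atTop (𝓝 L) := by
    have := ENNReal.tendsto_ofReal ((tendsto_pow_atTop_nhds_zero_of_lt_one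
      (by norm_num : (0 : ℝ) ≤ 2⁻¹) (by norm_num)).const_mul C)
    simpa using tendsto_const_nhds.add this
  exact (hx c hc).trans (ge_of_tendsto' hlim hL)

end CauchyNets

section PreorderedBanach

variable {X : Type} [NormedAddCommGroup X] [NormedSpace ℝ X] {K : Set X} {b : X}

lemma ddist_eq_zero_iff {a c : Bidual X} :
    ddist K a c = 0 ↔ ∀ φ ∈ posQ X K, (a - c) φ ≤ 0 := by
  simp [ddist]

lemma ofReal_apply_le_ddist {a c : Bidual X} {φ : StrongDual ℝ X} (hφ : φ ∈ posQ X K) :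
    ENNReal.ofReal ((a - c) φ) ≤ ddist K a c :=
  le_iSup₂ (f := fun φ (_ : φ ∈ posQ X K) => ENNReal.ofReal ((a - c) φ)) φ hφ

lemma isDistance_ddist : IsDistance (ddist K) := by
  intro a b c
  refine iSup₂_le fun φ hφ => ?_
  have hsplit : (a - c) φ = (a - b) φ + (b - c) φ := by simp
  rw [hsplit]
  exact ENNReal.ofReal_add_le.trans <|
    add_le_add (ofReal_apply_le_ddist hφ) (ofReal_apply_le_ddist hφ)

lemma ddist_inclusionInDoubleDual_le_norm_sub (u v : X) :
    ddist K (inclusionInDoubleDual ℝ X u) (inclusionInDoubleDual ℝ X v) ≤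
      ENNReal.ofReal ‖u - v‖ := by
  refine iSup₂_le fun φ hφ => ENNReal.ofReal_le_ofReal ?_
  calc (inclusionInDoubleDual ℝ X u - inclusionInDoubleDual ℝ X v) φ = φ (u - v) := by simp
    _ ≤ ‖φ‖ * ‖u - v‖ := (le_abs_self _).trans (φ.le_opNorm _)
    _ ≤ ‖u - v‖ := mul_le_of_le_one_left (norm_nonneg _) hφ.1

lemma ddist_inclusionInDoubleDual_eq_zero {u v : X} (huv : v - u ∈ K) :
    ddist K (inclusionInDoubleDual ℝ X u) (inclusionInDoubleDual ℝ X v) = 0 :=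
  ddist_eq_zero_iff.2 fun φ hφ => by simpa using hφ.2 _ huv

lemma apply_le_mul_norm_of_ddist_le {a c : Bidual X} {t : ℝ} (ht : 0 ≤ t)
    (h : ddist K a c ≤ ENNReal.ofReal t) {φ : StrongDual ℝ X} (hφ : ∀ v ∈ K, 0 ≤ φ v) :
    (a - c) φ ≤ t * ‖φ‖ := by
  rcases eq_or_ne φ 0 with rfl | hφ0
  · simp
  have hnφ : 0 < ‖φ‖ := norm_pos_iff.2 hφ0
  have hψ : ‖φ‖⁻¹ • φ ∈ posQ X K := by
    refine ⟨by rw [norm_smul, norm_inv, norm_norm, inv_mul_cancel₀ hnφ.ne'], fun v hv => ?_⟩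
    simpa using mul_nonneg (inv_nonneg.2 hnφ.le) (hφ v hv)
  have hle : (a - c) (‖φ‖⁻¹ • φ) ≤ t :=
    (ENNReal.ofReal_le_ofReal_iff ht).1 <| (ofReal_apply_le_ddist hψ).trans h
  rw [map_smul, smul_eq_mul, inv_mul_le_iff₀ hnφ] at hle
  linarith

def IsGoodCone.toProperCone (hK : IsGoodCone X K) : ProperCone ℝ X where
  carrier := K
  add_mem' ha hb := hK.2.2.2 _ ha _ hb
  zero_mem' := hK.2.1
  smul_mem' c _ hv := hK.2.2.1 c c.2 _ hv
  isClosed' := hK.1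

lemma sub_mem_of_ddist_inclusionInDoubleDual_eq_zero (hK : IsGoodCone X K) {u v : X}
    (h : ddist K (inclusionInDoubleDual ℝ X u) (inclusionInDoubleDual ℝ X v) = 0) :
    v - u ∈ K := by
  by_contra hvu
  obtain ⟨f, hfK, hf⟩ := hK.toProperCone.hyperplane_separation_point (x₀ := v - u) hvu
  have hfu : f u ≤ f v := by
    simpa using apply_le_mul_norm_of_ddist_le (K := K) (a := inclusionInDoubleDual ℝ X u)
      (c := inclusionInDoubleDual ℝ X v) le_rfl (by simp [h]) hfK
  simp only [map_sub] at hf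
  linarith

lemma norm_le_apply_of_unitBall_le (hb : ∀ x : X, ‖x‖ ≤ 1 → b - x ∈ K) {φ : StrongDual ℝ X}
    (hφ : ∀ v ∈ K, 0 ≤ φ v) : ‖φ‖ ≤ φ b := by
  refine φ.opNorm_le_of_unit_norm (by simpa using hφ _ (hb 0 (by simp))) fun v hv => ?_
  have hle : φ v ≤ φ b := by simpa using hφ _ (hb v hv.le)
  have hge : 0 ≤ φ b + φ v := by simpa using hφ _ (hb (-v) (by rw [norm_neg, hv]))
  exact abs_le.2 ⟨by linarith, hle⟩

lemma ddist_sub_smul_eq_zero_of_ddist_le (hb : ∀ x : X, ‖x‖ ≤ 1 → b - x ∈ K)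
    {a c : Bidual X} {t : ℝ} (ht : 0 ≤ t) (h : ddist K a c ≤ ENNReal.ofReal t) :
    ddist K (a - t • inclusionInDoubleDual ℝ X b) c = 0 := by
  refine ddist_eq_zero_iff.2 fun φ hφ => ?_
  have hdist := apply_le_mul_norm_of_ddist_le ht h hφ.2
  have hnorm := mul_le_mul_of_nonneg_left (norm_le_apply_of_unitBall_le hb hφ.2) ht
  have hsplit : (a - t • inclusionInDoubleDual ℝ X b - c) φ = (a - c) φ - t * φ b := by
    simp only [sub_apply, smul_apply, dual_def, smul_eq_mul]
    ring
  linarith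

lemma sub_sub_smul_mem_of_ddist_le (hK : IsGoodCone X K)
    (hb : ∀ x : X, ‖x‖ ≤ 1 → b - x ∈ K) {u v : X} {t : ℝ} (ht : 0 ≤ t)
    (h : ddist K (inclusionInDoubleDual ℝ X u) (inclusionInDoubleDual ℝ X v) ≤
      ENNReal.ofReal t) :
    v - (u - t • b) ∈ K :=
  sub_mem_of_ddist_inclusionInDoubleDual_eq_zero hK <| by
    simpa using ddist_sub_smul_eq_zero_of_ddist_le hb ht h

variable {ι : Type} {r : ι → ι → Prop} {y : ι → X}

lemma dCauchyN_of_monotone [Nonempty ι] (hmono : ∀ γ δ, r γ δ → y δ - y γ ∈ K) :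
    DCauchyN r (ddist K) fun i => inclusionInDoubleDual ℝ X (y i) := fun _ hε =>
  ⟨Classical.arbitrary ι, fun γ δ _ hγδ => by
    rwa [ddist_inclusionInDoubleDual_eq_zero (hmono γ δ hγδ)]⟩

theorem exists_monotone_biConvOn_of_dCauchyN (hK : IsGoodCone X K)
    (hb : ∀ x : X, ‖x‖ ≤ 1 → b - x ∈ K) [Nonempty ι] (htr : TransRel r) (hdir : DirRel r)
    {x : Bidual X} (hC : DCauchyN r (ddist K) fun i => inclusionInDoubleDual ℝ X (y i))
    (hx : BiConvOn r (ddist K) Set.univ (fun i => inclusionInDoubleDual ℝ X (y i)) x) :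
    ∃ (ι' : Type) (r' : ι' → ι' → Prop) (z : ι' → X),
      Nonempty ι' ∧ TransRel r' ∧ DirRel r' ∧ (∀ γ δ, r' γ δ → z δ - z γ ∈ K) ∧
      BiConvOn r' (ddist K) Set.univ (fun i => inclusionInDoubleDual ℝ X (z i)) x := by
  let z (p : CauchyIndex r (ddist K) fun i => inclusionInDoubleDual ℝ X (y i)) : X :=
    y p.idx - (2 * (2⁻¹ : ℝ) ^ p.n) • b
  have hbK : b ∈ K := by simpa using hb 0 (by simp)
  have hmono : ∀ p q, CauchyIndex.Precedes p q → z q - z p ∈ K := by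
    intro p q hpq
    have hstep := sub_sub_smul_mem_of_ddist_le hK hb (by positivity) (p.dist_le q.idx hpq.1)
    have hgap : 0 ≤ 2⁻¹ ^ p.n - 2 * (2⁻¹ : ℝ) ^ q.n := by
      have := pow_le_pow_of_le_one (by norm_num) (by norm_num : (2⁻¹ : ℝ) ≤ 1) hpq.2
      rw [pow_succ] at this
      linarith
    have hsplit : z q - z p = (y q.idx - (y p.idx - (2⁻¹ : ℝ) ^ p.n • b)) +
        (2⁻¹ ^ p.n - 2 * (2⁻¹ : ℝ) ^ q.n) • b := by
      simp only [z]; module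
    rw [hsplit]
    exact hK.2.2.2 _ hstep _ (hK.2.2.1 _ hgap _ hbK)
  have hupper := upperConvOn_of_dist_le isDistance_ddist htr hdir hC hx.1
    (z := fun p => inclusionInDoubleDual ℝ X (z p)) (C := 2 * ‖b‖) (by positivity)
    fun p => (ddist_inclusionInDoubleDual_le_norm_sub _ _).trans_eq <| congrArg ENNReal.ofReal <| by
      simp only [z]
      rw [_root_.sub_sub_cancel, norm_smul, Real.norm_of_nonneg (by positivity)]
      ring
  have hlower : LowerConvOn CauchyIndex.Precedes (ddist K) Set.univ
      (fun p => inclusionInDoubleDual ℝ X (z p)) x := by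
    have := CauchyIndex.nonempty hC hdir
    refine lowerConvOn_of_forall_dist_eq_zero isDistance_ddist fun p => ?_
    have hyx := dist_le_of_lowerConvOn hdir hx.2 (Set.mem_univ _) p.dist_le
    simpa [z] using ddist_sub_smul_eq_zero_of_ddist_le hb (by positivity)
      (hyx.trans (ENNReal.ofReal_le_ofReal (le_mul_of_one_le_left (by positivity) one_le_two)))
  exact ⟨_, CauchyIndex.Precedes, z, CauchyIndex.nonempty hC hdir,
    CauchyIndex.transRel_precedes htr, CauchyIndex.dirRel_precedes htr hdir hC, hmono,
    hupper, hlower⟩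

end PreorderedBanach

theorem stmt11_general (X : Type) [NormedAddCommGroup X] [NormedSpace ℝ X]
    (K : Set X) (hK : IsGoodCone X K)
    (hbd : ∃ b : X, ∀ x : X, ‖x‖ ≤ 1 → b - x ∈ K)
    (x : Bidual X) :
    (∃ (ι : Type) (r : ι → ι → Prop) (y : ι → X),
      Nonempty ι ∧ TransRel r ∧ DirRel r ∧
      DCauchyN r (ddist K) (fun i => NormedSpace.inclusionInDoubleDual ℝ X (y i)) ∧
      BiConvOn r (ddist K) Set.univ
        (fun i => NormedSpace.inclusionInDoubleDual ℝ X (y i)) x) ↔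
    (∃ (ι : Type) (r : ι → ι → Prop) (y : ι → X),
      Nonempty ι ∧ TransRel r ∧ DirRel r ∧
      (∀ γ δ, r γ δ → y δ - y γ ∈ K) ∧
      BiConvOn r (ddist K) Set.univ
        (fun i => NormedSpace.inclusionInDoubleDual ℝ X (y i)) x) := by
  obtain ⟨b, hb⟩ := hbd
  constructor
  · rintro ⟨ι, r, y, hι, htr, hdir, hC, hx⟩
    exact exists_monotone_biConvOn_of_dCauchyN hK hb htr hdir hC hx
  · rintro ⟨ι, r, y, hι, htr, hdir, hmono, hx⟩
    exact ⟨ι, r, y, hι, htr, hdir, dCauchyN_of_monotone hmono, hx⟩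

/-- if the unit ball `X^1` is `≤`-bounded then `X^C = X^m`: `x ∈ X**` is
the `→^◦_◦`-limit of a `d`-Cauchy net with terms in `X` iff it is the `→^◦_◦`-limit of
a `≤`-increasing net with terms in `X`. -/
theorem stmt11 (X : Type) [NormedAddCommGroup X] [NormedSpace ℝ X] [CompleteSpace X]
    (K : Set X) (hK : IsGoodCone X K)
    (hbd : ∃ b : X, ∀ x : X, ‖x‖ ≤ 1 → b - x ∈ K)
    (x : Bidual X) :
    (∃ (ι : Type) (r : ι → ι → Prop) (y : ι → X),
      Nonempty ι ∧ TransRel r ∧ DirRel r ∧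
      DCauchyN r (ddist K) (fun i => NormedSpace.inclusionInDoubleDual ℝ X (y i)) ∧
      BiConvOn r (ddist K) Set.univ
        (fun i => NormedSpace.inclusionInDoubleDual ℝ X (y i)) x) ↔
    (∃ (ι : Type) (r : ι → ι → Prop) (y : ι → X),
      Nonempty ι ∧ TransRel r ∧ DirRel r ∧
      (∀ γ δ, r γ δ → y δ - y γ ∈ K) ∧
      BiConvOn r (ddist K) Set.univ
        (fun i => NormedSpace.inclusionInDoubleDual ℝ X (y i)) x) :=
  stmt11_general X K hK hbd x
end

section
/- Let X be a preordered Banach space and Q a compact Hausdorff space. For every f ∈ C(Q, X) (norm-continuous functions Q → X), the supremum half-seminorm coincides with the canonical half-seminorm: sup_{p∈Q} ‖f(p)‖_≤ = inf{ sup_{p∈Q} ‖g(p)‖ : g ∈ C(Q, X) and f(p) ≤ g(p) for all p ∈ Q }. -/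
/-!
The inequality `≤` is pointwise. For `≥`, pick for every `p` some `b_p ≥ f(p)` with
`‖b_p‖ ≤ sup_q ‖f(q)‖_≤ + ε`. Near `p` the continuous function `b_p + (f - f(p))` still dominates
`f` and has norm at most `sup_q ‖f(q)‖_≤ + 2ε`; both conditions on a value at `q` are convex, so a
partition of unity on the compact Hausdorff space `Q` glues these local choices into a
continuous `g ≥ f` with the same norm bound.
-/

open TopologicalSpace ENNReal

theorem IsGoodCone.convex {X : Type} [NormedAddCommGroup X] [NormedSpace ℝ X] {K : Set X}
    (hK : IsGoodCone X K) : Convex ℝ K :=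
  fun _ hx _ hy a b ha hb _ => hK.2.2.2 _ (hK.2.2.1 a ha _ hx) _ (hK.2.2.1 b hb _ hy)

theorem ContinuousMap.exists_sub_mem_norm_le {Q X : Type} [TopologicalSpace Q] [NormalSpace Q]
    [ParacompactSpace Q] [NormedAddCommGroup X] [NormedSpace ℝ X] {K : Set X}
    (hK : Convex ℝ K) (f : C(Q, X)) {r ε : ℝ} (hε : 0 < ε)
    (hb : ∀ p, ∃ b, b - f p ∈ K ∧ ‖b‖ ≤ r) :
    ∃ g : C(Q, X), ∀ q, g q - f q ∈ K ∧ ‖g q‖ ≤ r + ε := by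
  have hconvex : ∀ q, Convex ℝ {y : X | y - f q ∈ K ∧ ‖y‖ ≤ r + ε} := fun q => by
    convert (hK.translate_preimage_right (-f q)).inter (convex_closedBall (0 : X) (r + ε)) using 1
    ext y
    simp [sub_eq_neg_add]
  refine exists_continuous_forall_mem_convex_of_local hconvex fun p => ?_
  obtain ⟨b, hbK, hbr⟩ := hb p
  have hnear : {q | ‖f q - f p‖ < ε} ∈ nhds p :=
    (isOpen_lt (f := fun q => ‖f q - f p‖) (by fun_prop) continuous_const).mem_nhds
      (by simpa using hε)
  refine ⟨_, hnear, fun q => b + (f q - f p), by fun_prop, fun q hq => ⟨?_, ?_⟩⟩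
  · convert hbK using 1
    simp only
    abel
  calc ‖b + (f q - f p)‖ ≤ ‖b‖ + ‖f q - f p‖ := norm_add_le _ _
    _ ≤ r + ε := add_le_add hbr hq.le

theorem stmt14_general (X : Type) [NormedAddCommGroup X] [NormedSpace ℝ X]
    (K : Set X) (hK : IsGoodCone X K)
    (Q : Type) [TopologicalSpace Q] [CompactSpace Q] [T2Space Q]
    (f : C(Q, X)) :
    (⨆ p : Q, ⨅ b ∈ {b : X | b - f p ∈ K}, (‖b‖₊ : ℝ≥0∞)) =
      ⨅ g ∈ {g : C(Q, X) | ∀ p, g p - f p ∈ K}, ⨆ p : Q, (‖g p‖₊ : ℝ≥0∞) := by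
  set L := ⨆ p : Q, ⨅ b ∈ {b : X | b - f p ∈ K}, (‖b‖₊ : ℝ≥0∞)
  refine le_antisymm (le_iInf₂ fun g hg => iSup_mono fun p => iInf₂_le (g p) (hg p)) ?_
  refine ENNReal.le_of_forall_pos_le_add fun ε hε hL => ?_
  have hb : ∀ p, ∃ b, b - f p ∈ K ∧ ‖b‖ ≤ L.toReal + ε / 2 := fun p => by
    have hlt : ⨅ b ∈ {b : X | b - f p ∈ K}, (‖b‖₊ : ℝ≥0∞) < ENNReal.ofReal (L.toReal + ε / 2) :=
      (le_iSup (fun p => ⨅ b ∈ {b : X | b - f p ∈ K}, (‖b‖₊ : ℝ≥0∞)) p).trans_lt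
        ((lt_ofReal_iff_toReal_lt hL.ne).2 (by simpa using half_pos hε))
    obtain ⟨b, hb_lt⟩ := iInf_lt_iff.1 hlt
    obtain ⟨hbK, hbr⟩ := iInf_lt_iff.1 hb_lt
    rw [← enorm_eq_nnnorm, ← ofReal_norm, ENNReal.ofReal_lt_ofReal_iff'] at hbr
    exact ⟨b, hbK, hbr.1.le⟩
  obtain ⟨g, hg⟩ := f.exists_sub_mem_norm_le hK.convex (by positivity : (0 : ℝ) < ε / 2) hb
  calc _ ≤ ⨆ p, (‖g p‖₊ : ℝ≥0∞) := iInf₂_le g fun p => (hg p).1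
    _ ≤ ENNReal.ofReal (L.toReal + ε) := iSup_le fun p => by
      rw [← enorm_eq_nnnorm, ← ofReal_norm]
      exact ENNReal.ofReal_le_ofReal ((hg p).2.trans_eq (by ring))
    _ = L + ε := by
      rw [ENNReal.ofReal_add ENNReal.toReal_nonneg ε.coe_nonneg, ENNReal.ofReal_toReal hL.ne,
        ENNReal.ofReal_coe_nnreal]

/-- for `f ∈ C(Q, X)` the supremum half-seminorm coincides with the
canonical half-seminorm: `sup_p ‖f(p)‖_≤ = inf { sup_p ‖g(p)‖ : g ∈ C(Q,X), f ≤ g }`. -/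
theorem stmt14 (X : Type) [NormedAddCommGroup X] [NormedSpace ℝ X] [CompleteSpace X]
    (K : Set X) (hK : IsGoodCone X K)
    (Q : Type) [TopologicalSpace Q] [CompactSpace Q] [T2Space Q]
    (f : C(Q, X)) :
    (⨆ p : Q, ⨅ b ∈ {b : X | b - f p ∈ K}, (‖b‖₊ : ℝ≥0∞)) =
      ⨅ g ∈ {g : C(Q, X) | ∀ p, g p - f p ∈ K}, ⨆ p : Q, (‖g p‖₊ : ℝ≥0∞) :=
  stmt14_general X K hK Q f
end

section
/- Let X be a preordered Banach space with X* = X*_+ − X*_+ (every continuous linear functional on X is a difference of two positive functionals). If x ∈ X** is such that the function φ ↦ x(φ) is continuous on Q = X^{*1}_+ with respect to the weak* topology, then x belongs to the canonical image of X in X**. -/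
open TopologicalSpace ENNReal

/-!
By Baire's theorem applied to the weak*-compact, hence norm-closed, sets `n • (Q - Q)`, which
cover `X*` when `X* = X*_+ - X*_+`, the dual unit ball lies in `M • (Q - Q)` for some `M`.
The map `(ψ, θ) ↦ M • (ψ - θ)` from the compact space `Q × Q` onto `M • (Q - Q)` is a quotient
map, and `x` composed with it is `M (x ψ - x θ)`, which is continuous; so `x` is weak*-continuous
on the dual unit ball. Such an `x` is `ε`-bounded on the annihilator of a finite set, so by
Hahn–Banach it is within `ε` of a combination of evaluations, i.e. of the image of `X`; this image
is closed because `X` is complete.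
-/

open NormedSpace Filter Set Topology Metric

theorem IsCompact.continuousOn_image_of_comp {α β γ : Type*} [TopologicalSpace α]
    [TopologicalSpace β] [T2Space β] [TopologicalSpace γ] {s : Set α} (hs : IsCompact s)
    {g : α → β} (hg : ContinuousOn g s) {f : β → γ} (hfg : ContinuousOn (f ∘ g) s) :
    ContinuousOn f (g '' s) := by
  have : CompactSpace s := isCompact_iff_compactSpace.1 hs
  have hq : IsQuotientMap (s.imageFactorization g) :=
    .of_surjective_continuous imageFactorization_surjective
      (hg.domRestrict.subtype_mk fun a => mem_image_of_mem g a.2)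
  rw [continuousOn_iff_continuous_domRestrict, hq.continuous_iff]
  exact hfg.domRestrict

section WeakStarContinuity

variable {X : Type} [NormedAddCommGroup X] [NormedSpace ℝ X]

theorem WeakDual.exists_finset_forall_eq_zero_mem_of_mem_nhds_zero {U : Set (WeakDual ℝ X)}
    (hU : U ∈ 𝓝 0) : ∃ s : Finset X, ∀ φ : WeakDual ℝ X, (∀ a ∈ s, φ a = 0) → φ ∈ U := by
  obtain ⟨V, hV, hVU⟩ :=
    mem_comap.1 ((nhds_induced (fun (φ : WeakDual ℝ X) (a : X) => φ a) 0) ▸ hU)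
  rw [nhds_pi, Filter.mem_pi'] at hV
  obtain ⟨s, t, ht, hst⟩ := hV
  refine ⟨s, fun φ hφ => hVU (hst fun a ha => ?_)⟩
  have h0 : t a ∈ 𝓝 0 := ht a
  show φ a ∈ t a
  rw [hφ a ha]
  exact mem_of_mem_nhds h0

theorem exists_finset_abs_le_mul_norm_of_continuousWithinAt
    {x : StrongDual ℝ (StrongDual ℝ X)}
    (hx : ContinuousWithinAt (fun φ : WeakDual ℝ X => x (WeakDual.toStrongDual φ))
      (WeakDual.toStrongDual ⁻¹' closedBall 0 1) 0) {ε : ℝ} (hε : 0 < ε) :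
    ∃ s : Finset X, ∀ φ : StrongDual ℝ X, (∀ a ∈ s, φ a = 0) → |x φ| ≤ ε * ‖φ‖ := by
  have hU := mem_inf_principal.1 (hx.eventually (Metric.ball_mem_nhds _ hε))
  obtain ⟨s, hs⟩ := WeakDual.exists_finset_forall_eq_zero_mem_of_mem_nhds_zero hU
  refine ⟨s, fun φ hφ => ?_⟩
  rcases eq_or_ne φ 0 with rfl | hne
  · simp
  have hpos : 0 < ‖φ‖ := norm_pos_iff.2 hne
  set ψ : StrongDual ℝ X := ‖φ‖⁻¹ • φ
  have hψ : |x ψ| < ε := by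
    have := hs (StrongDual.toWeakDual ψ) (fun a ha => by change ψ a = 0; simp [ψ, hφ a ha]) (by
      simp [ψ, norm_smul, inv_mul_cancel₀ hpos.ne'])
    simpa [Real.dist_eq] using this
  have hxφ : x φ = ‖φ‖ * x ψ := by
    simp [ψ, map_smul, mul_inv_cancel_left₀ hpos.ne']
  rw [hxφ, abs_mul, abs_norm, mul_comm]
  exact mul_le_mul_of_nonneg_right hψ.le (norm_nonneg φ)

theorem exists_norm_sub_inclusionInDoubleDual_le {x : StrongDual ℝ (StrongDual ℝ X)} {ε : ℝ}
    (hε : 0 ≤ ε) {s : Finset X}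
    (hs : ∀ φ : StrongDual ℝ X, (∀ a ∈ s, φ a = 0) → |x φ| ≤ ε * ‖φ‖) :
    ∃ a : X, ‖x - inclusionInDoubleDual ℝ X a‖ ≤ ε := by
  set J := (ContinuousLinearMap.coeLM ℝ).comp (inclusionInDoubleDual ℝ X).toLinearMap
  set W := ⨅ a : s, LinearMap.ker (J a)
  have hW : ∀ φ ∈ W, ∀ a ∈ s, φ a = 0 := fun φ hφ a ha =>
    LinearMap.mem_ker.1 (Submodule.mem_iInf _ |>.1 hφ ⟨a, ha⟩)
  set f := LinearMap.mkContinuous (x.toLinearMap.comp W.subtype) ε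
    (fun φ => by simpa [Real.norm_eq_abs] using hs φ (hW φ φ.2))
  -- `x - g` vanishes on `W = ⋂ a ∈ s, ker (J a)`, so it is a combination of the `J a`
  obtain ⟨g, hgf, hg⟩ := exists_extension_norm_eq W f
  have hker : W ≤ LinearMap.ker (x - g).toLinearMap := fun φ hφ => by
    simpa [sub_eq_zero, f] using (hgf ⟨φ, hφ⟩).symm
  obtain ⟨a, ha⟩ : (x - g).toLinearMap ∈ LinearMap.range J :=
    Submodule.span_le.2 (range_subset_iff.2 fun a : s => LinearMap.mem_range_self J a)
      (mem_span_of_iInf_ker_le_ker (L := fun a : s => J a) hker)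
  refine ⟨a, ?_⟩
  have : inclusionInDoubleDual ℝ X a = x - g := ContinuousLinearMap.coe_injective ha
  rw [this, show x - (x - g) = g from sub_sub_cancel x g, hg]
  exact LinearMap.mkContinuous_norm_le _ hε _

theorem mem_range_inclusionInDoubleDual_of_continuousWithinAt [CompleteSpace X]
    {x : StrongDual ℝ (StrongDual ℝ X)}
    (hx : ContinuousWithinAt (fun φ : WeakDual ℝ X => x (WeakDual.toStrongDual φ))
      (WeakDual.toStrongDual ⁻¹' closedBall 0 1) 0) :
    x ∈ range (inclusionInDoubleDual ℝ X) := by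
  have hclosed : IsClosed (range (inclusionInDoubleDual ℝ X)) := by
    have := Isometry.isClosedEmbedding (α := X) (γ := StrongDual ℝ (StrongDual ℝ X))
      (inclusionInDoubleDualLi ℝ).isometry
    exact this.isClosed_range
  refine hclosed.closure_subset
    (Metric.mem_closure_iff (α := StrongDual ℝ (StrongDual ℝ X)) |>.2 fun ε hε => ?_)
  obtain ⟨s, hs⟩ := exists_finset_abs_le_mul_norm_of_continuousWithinAt hx (half_pos hε)
  obtain ⟨a, ha⟩ := exists_norm_sub_inclusionInDoubleDual_le (half_pos hε).le hs
  exact ⟨_, mem_range_self a, (dist_eq_norm x _).trans_lt (by linarith)⟩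

end WeakStarContinuity

section PositiveDual

variable {X : Type} [NormedAddCommGroup X] [NormedSpace ℝ X] {K : Set X}

theorem continuousOn_preimage_posQ_of_continuous {Y : Type} [TopologicalSpace Y]
    {g : StrongDual ℝ X → Y} (hg : @Continuous (posQ X K) Y (qTop X K) _ fun φ => g φ.1) :
    ContinuousOn (g ∘ WeakDual.toStrongDual) (WeakDual.toStrongDual ⁻¹' posQ X K) := by
  have hincl : @Continuous _ (posQ X K) _ (qTop X K)
      fun φ : WeakDual.toStrongDual ⁻¹' posQ X K =>
        (⟨WeakDual.toStrongDual φ, φ.2⟩ : posQ X K) := by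
    unfold qTop
    exact continuous_induced_rng.2 (WeakDual.coeFn_continuous.comp continuous_subtype_val)
  exact continuousOn_iff_continuous_domRestrict.2
    (@Continuous.comp _ _ _ _ (qTop X K) _ _ _ hg hincl)

theorem convex_posQ : Convex ℝ (posQ X K) := by
  intro ψ hψ θ hθ a b ha hb hab
  refine ⟨?_, fun v hv => ?_⟩
  · simpa [← dist_zero_right] using
      convex_closedBall (0 : StrongDual ℝ X) 1 (by simpa using hψ.1) (by simpa using hθ.1) ha hb hab
  · simpa using add_nonneg (mul_nonneg ha (hψ.2 v hv)) (mul_nonneg hb (hθ.2 v hv))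

theorem isCompact_preimage_posQ : IsCompact (WeakDual.toStrongDual ⁻¹' posQ X K) := by
  have hpos : IsClosed {φ : WeakDual ℝ X | ∀ v ∈ K, 0 ≤ φ v} := by
    simp only [ofPred_forall]
    exact isClosed_biInter fun v _ => isClosed_le continuous_const (WeakDual.eval_continuous v)
  convert (WeakDual.isCompact_closedBall (0 : StrongDual ℝ X) 1).inter_right hpos using 1
  ext φ
  simp [posQ]

variable (X K) in
def posQDiffs (r : ℝ) : Set (WeakDual ℝ X) :=
  (fun p : WeakDual ℝ X × WeakDual ℝ X => r • (p.1 - p.2)) ''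
    ((WeakDual.toStrongDual ⁻¹' posQ X K) ×ˢ (WeakDual.toStrongDual ⁻¹' posQ X K))

theorem isCompact_posQDiffs (r : ℝ) : IsCompact (posQDiffs X K r) :=
  (isCompact_preimage_posQ.prod isCompact_preimage_posQ).image
    ((continuous_fst.sub continuous_snd).const_smul r)

theorem smul_mem_posQDiffs {φ : WeakDual ℝ X} {r : ℝ} (hφ : φ ∈ posQDiffs X K r) (c : ℝ) :
    c • φ ∈ posQDiffs X K (c * r) := by
  obtain ⟨p, hp, rfl⟩ := hφ
  exact ⟨p, hp, by simp only [smul_smul]⟩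

theorem sub_mem_posQDiffs {φ φ' : WeakDual ℝ X} {r : ℝ} (hφ : φ ∈ posQDiffs X K r)
    (hφ' : φ' ∈ posQDiffs X K r) : φ - φ' ∈ posQDiffs X K (2 * r) := by
  obtain ⟨⟨ψ, θ⟩, ⟨hψ, hθ⟩, rfl⟩ := hφ
  obtain ⟨⟨ψ', θ'⟩, ⟨hψ', hθ'⟩, rfl⟩ := hφ'
  have hmid : ∀ {χ χ' : WeakDual ℝ X}, WeakDual.toStrongDual χ ∈ posQ X K →
      WeakDual.toStrongDual χ' ∈ posQ X K →
      WeakDual.toStrongDual ((2 : ℝ)⁻¹ • χ + (2 : ℝ)⁻¹ • χ') ∈ posQ X K := fun hχ hχ' => by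
    simpa using convex_posQ hχ hχ' (by norm_num) (by norm_num) (by norm_num)
  refine ⟨⟨(2 : ℝ)⁻¹ • ψ + (2 : ℝ)⁻¹ • θ', (2 : ℝ)⁻¹ • θ + (2 : ℝ)⁻¹ • ψ'⟩,
    ⟨hmid hψ hθ', hmid hθ hψ'⟩, ?_⟩
  module

theorem toWeakDual_sub_mem_posQDiffs {ψ θ : StrongDual ℝ X} {r : ℝ} (hr : 0 < r)
    (hψ : ∀ v ∈ K, 0 ≤ ψ v) (hθ : ∀ v ∈ K, 0 ≤ θ v) (hψr : ‖ψ‖ ≤ r) (hθr : ‖θ‖ ≤ r) :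
    StrongDual.toWeakDual (ψ - θ) ∈ posQDiffs X K r := by
  have hscale : ∀ {χ : StrongDual ℝ X}, (∀ v ∈ K, 0 ≤ χ v) → ‖χ‖ ≤ r → r⁻¹ • χ ∈ posQ X K :=
    fun hχ hχr => ⟨by rwa [norm_smul, Real.norm_of_nonneg (inv_nonneg.2 hr.le), inv_mul_le_one₀ hr],
      fun v hv => mul_nonneg (inv_nonneg.2 hr.le) (hχ v hv)⟩
  refine ⟨⟨StrongDual.toWeakDual (r⁻¹ • ψ), StrongDual.toWeakDual (r⁻¹ • θ)⟩,
    ⟨hscale hψ hψr, hscale hθ hθr⟩, ?_⟩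
  simp [← smul_sub, smul_smul, hr.ne']

theorem exists_preimage_closedBall_subset_posQDiffs
    (hgen : ∀ φ : StrongDual ℝ X, ∃ ψ θ : StrongDual ℝ X,
      (∀ v ∈ K, 0 ≤ ψ v) ∧ (∀ v ∈ K, 0 ≤ θ v) ∧ φ = ψ - θ) :
    ∃ M : ℝ, WeakDual.toStrongDual ⁻¹' closedBall 0 1 ⊆ posQDiffs X K M := by
  have hclosed : ∀ n : ℕ, IsClosed (StrongDual.toWeakDual ⁻¹' posQDiffs X K n) := fun n =>
    (isCompact_posQDiffs _).isClosed.preimage Dual.toWeakDual_continuous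
  have hcover : ⋃ n : ℕ, StrongDual.toWeakDual ⁻¹' posQDiffs X K n = univ := by
    refine eq_univ_of_forall fun φ => mem_iUnion.2 ?_
    obtain ⟨ψ, θ, hψ, hθ, rfl⟩ := hgen φ
    obtain ⟨n, hn⟩ := exists_nat_gt (max ‖ψ‖ ‖θ‖)
    have hn₀ : (0 : ℝ) < n := (le_max_left _ _).trans_lt hn |>.trans_le' (norm_nonneg ψ)
    exact ⟨n, toWeakDual_sub_mem_posQDiffs hn₀ hψ hθ
      ((le_max_left _ _).trans hn.le) ((le_max_right _ _).trans hn.le)⟩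
  obtain ⟨n, φ₀, hφ₀⟩ := nonempty_interior_of_iUnion_of_closed hclosed hcover
  obtain ⟨ρ, hρ, hball⟩ := Metric.mem_nhds_iff.1 (mem_interior_iff_mem_nhds.1 hφ₀)
  refine ⟨2 / ρ * (2 * n), fun φ hφ => ?_⟩
  have hshift : φ₀ + (ρ / 2) • WeakDual.toStrongDual φ ∈ ball φ₀ ρ := by
    have : ‖WeakDual.toStrongDual φ‖ ≤ 1 := by simpa using hφ
    rw [mem_ball_iff_norm, add_sub_cancel_left, norm_smul, Real.norm_of_nonneg (by positivity)]
    nlinarith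
  -- `n • (Q - Q)` contains a ball around `φ₀`; subtracting `φ₀` gives a ball around `0`
  have hsub := sub_mem_posQDiffs
    (φ := StrongDual.toWeakDual (φ₀ + (ρ / 2) • WeakDual.toStrongDual φ))
    (φ' := StrongDual.toWeakDual φ₀) (hball hshift) (hball (mem_ball_self hρ))
  convert smul_mem_posQDiffs hsub (2 / ρ) using 1
  simp only [map_add, map_smul, WeakDual.toWeakDual_toStrongDual, add_sub_cancel_left, smul_smul]
  rw [div_mul_div_comm, mul_comm, div_self (by positivity), one_smul]

theorem continuousOn_posQDiffs {x : StrongDual ℝ (StrongDual ℝ X)}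
    (hx : ContinuousOn (fun φ : WeakDual ℝ X => x (WeakDual.toStrongDual φ))
      (WeakDual.toStrongDual ⁻¹' posQ X K)) (r : ℝ) :
    ContinuousOn (fun φ : WeakDual ℝ X => x (WeakDual.toStrongDual φ)) (posQDiffs X K r) := by
  refine (isCompact_preimage_posQ.prod isCompact_preimage_posQ).continuousOn_image_of_comp
    (g := fun p : WeakDual ℝ X × WeakDual ℝ X => r • (p.1 - p.2))
    ((continuous_fst.sub continuous_snd).const_smul r).continuousOn ?_
  have hcomp : ((fun φ : WeakDual ℝ X => x (WeakDual.toStrongDual φ)) ∘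
      fun p : WeakDual ℝ X × WeakDual ℝ X => r • (p.1 - p.2)) =
      fun p => r * (x (WeakDual.toStrongDual p.1) - x (WeakDual.toStrongDual p.2)) := by
    ext p
    simp
  rw [hcomp]
  exact continuousOn_const.mul ((hx.comp continuousOn_fst fun p hp => hp.1).sub
    (hx.comp continuousOn_snd fun p hp => hp.2))

end PositiveDual

theorem stmt19_general (X : Type) [NormedAddCommGroup X] [NormedSpace ℝ X] [CompleteSpace X]
    (K : Set X)
    (hgen : ∀ φ : StrongDual ℝ X, ∃ ψ θ : StrongDual ℝ X,
      (∀ v ∈ K, 0 ≤ ψ v) ∧ (∀ v ∈ K, 0 ≤ θ v) ∧ φ = ψ - θ)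
    (x : Bidual X)
    (hx : @Continuous (posQ X K) ℝ (qTop X K) _ fun φ => x φ.1) :
    ∃ a : X, x = NormedSpace.inclusionInDoubleDual ℝ X a := by
  obtain ⟨M, hM⟩ := exists_preimage_closedBall_subset_posQDiffs hgen
  have hball := (continuousOn_posQDiffs (continuousOn_preimage_posQ_of_continuous hx) M).mono hM
  obtain ⟨a, ha⟩ := mem_range_inclusionInDoubleDual_of_continuousWithinAt (hball 0 (by simp))
  exact ⟨a, ha.symm⟩

/-- if `X* = X*_+ - X*_+` and `x ∈ X**` restricts to a weak*-continuous
function on `Q = X^{*1}_+`, then `x` lies in the canonical image of `X` in `X**`. -/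
theorem stmt19 (X : Type) [NormedAddCommGroup X] [NormedSpace ℝ X] [CompleteSpace X]
    (K : Set X) (hK : IsGoodCone X K)
    (hgen : ∀ φ : StrongDual ℝ X, ∃ ψ θ : StrongDual ℝ X,
      (∀ v ∈ K, 0 ≤ ψ v) ∧ (∀ v ∈ K, 0 ≤ θ v) ∧ φ = ψ - θ)
    (x : Bidual X)
    (hx : @Continuous (posQ X K) ℝ (qTop X K) _ fun φ => x φ.1) :
    ∃ a : X, x = NormedSpace.inclusionInDoubleDual ℝ X a :=
  stmt19_general X K hgen x hx
end
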